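/- arXiv:1103.0949 — 2 statements merged into one kernel-verified Lean document; each statement's English description precedes it below -/
import Mathlib

section
/- For any admissible expert sequence i₁ⁿ with at most m switches (σ(i₁ⁿ) = Σ_{t=1}^{n−1} 1[i_{t+1} ≠ i_t] ≤ m), the initial weight satisfies φ₀(i₁ⁿ) ≥ (α/q_n)^m · (1−α)^{n−m}, where q_n = 1 + ⌊n/τ⌋. -/
/-- Number of available experts at time `t`: `q_t = 1 + ⌊t/τ⌋`. -/
def q (τ t : ℕ) : ℕ := 1 + t / τ

/-- Growing-ensemble initial weights: `φ₀(1) = 1` and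
`φ₀(i₁^{t+1}) = φ₀(i₁^t)·(α/q_{t+1} + (1-α)·1[i_{t+1}=i_t])` for admissible extensions. -/
noncomputable def phi0 (τ : ℕ) (α : ℝ) (i : ℕ → ℕ) : ℕ → ℝ
  | 0 => 1
  | 1 => if i 1 = 1 then 1 else 0
  | t + 2 =>
      phi0 τ α i (t + 1) *
        (if 1 ≤ i (t + 2) ∧ i (t + 2) ≤ q τ (t + 2) then
          α / (q τ (t + 2) : ℝ) + (1 - α) * (if i (t + 2) = i (t + 1) then 1 else 0)
        else 0)

/-- for any admissible expert sequence with at most `m` switches,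
`φ₀(i₁ⁿ) ≥ (α/q_n)^m (1-α)^{n-m}`. -/
theorem phi0_lower_bound (τ n m : ℕ) (hτ : 1 ≤ τ) (hn : 1 ≤ n) (hm : m ≤ n - 1)
    (α : ℝ) (hα0 : 0 < α) (hα1 : α < 1) (i : ℕ → ℕ)
    (hfirst : i 1 = 1)
    (hadm : ∀ t, 1 ≤ t → t ≤ n → 1 ≤ i t ∧ i t ≤ q τ t)
    (hσ : ((Finset.Icc 1 (n - 1)).filter (fun t => i (t + 1) ≠ i t)).card ≤ m) :
    (α / (q τ n : ℝ)) ^ m * (1 - α) ^ (n - m) ≤ phi0 τ α i n := by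
  have hQpos : (0:ℝ) < (q τ n : ℝ) := by
    have : 1 ≤ q τ n := Nat.le_add_right 1 _
    exact_mod_cast Nat.lt_of_lt_of_le Nat.zero_lt_one this
  set a : ℝ := α / (q τ n : ℝ) with ha_def
  set b : ℝ := 1 - α with hb_def
  have ha : 0 < a := div_pos hα0 hQpos
  have hb : 0 < b := by simp [hb_def]; linarith
  have hb1 : b ≤ 1 := by simp [hb_def]; linarith
  set M : ℝ := max a b with hM_def
  have hMpos : 0 < M := lt_of_lt_of_le ha (le_max_left _ _)
  -- q is monotone up to n
  have hqle : ∀ t, t ≤ n → a ≤ α / (q τ t : ℝ) := by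
    intro t htn
    have hq1 : (0:ℝ) < (q τ t : ℝ) := by
      have : 1 ≤ q τ t := Nat.le_add_right 1 _
      exact_mod_cast Nat.lt_of_lt_of_le Nat.zero_lt_one this
    have hmono : q τ t ≤ q τ n := by
      unfold q; exact Nat.add_le_add_left (Nat.div_le_div_right htn) 1
    exact div_le_div_of_nonneg_left hα0.le hq1 (by exact_mod_cast hmono)
  set c : ℕ → ℕ := fun t => ((Finset.Icc 1 t).filter (fun s => i (s + 1) ≠ i s)).card
    with hc_def
  have hcle : ∀ t, c t ≤ t := by
    intro t
    have := Finset.card_filter_le (Finset.Icc 1 t) (fun s => i (s + 1) ≠ i s)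
    simpa [hc_def] using this
  have key : ∀ t, t ≤ n - 1 → a ^ (c t) * M ^ (t - c t) ≤ phi0 τ α i (t + 1) := by
    intro t
    induction t with
    | zero => intro _; simp [phi0, hfirst, hc_def]
    | succ t ih =>
      intro ht
      have ht' : t ≤ n - 1 := le_trans (Nat.le_succ t) ht
      have ihx := ih ht'
      have htn : t + 2 ≤ n := by omega
      have hadm2 := hadm (t + 2) (by omega) htn
      have hphi : phi0 τ α i (t + 2) = phi0 τ α i (t + 1) *
          (α / (q τ (t + 2) : ℝ) + (1 - α) * (if i (t + 2) = i (t + 1) then 1 else 0)) := by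
        rw [phi0, if_pos hadm2]
      have hphi_nonneg : 0 ≤ phi0 τ α i (t + 1) :=
        le_trans (by positivity) ihx
      have hnotmem : (t + 1) ∉ Finset.Icc 1 t := by simp
      have hsplit : c (t + 1) = c t + (if i (t + 2) ≠ i (t + 1) then 1 else 0) := by
        have hIcc : Finset.Icc 1 (t + 1) = insert (t + 1) (Finset.Icc 1 t) := by
          ext x; simp [Finset.mem_Icc, Finset.mem_insert]; omega
        simp only [hc_def, hIcc, Finset.filter_insert]
        by_cases hsw : i (t + 1 + 1) ≠ i (t + 1)
        · rw [if_pos hsw, Finset.card_insert_of_notMem (by simp [hnotmem])]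
          simp [hsw]
        · rw [if_neg hsw]; simp [hsw]
      by_cases hsw : i (t + 2) = i (t + 1)
      · -- no switch
        have hc' : c (t + 1) = c t := by simp [hsplit, hsw]
        have hfac : M ≤ α / (q τ (t + 2) : ℝ) + (1 - α) *
            (if i (t + 2) = i (t + 1) then 1 else 0) := by
          rw [if_pos hsw]
          apply max_le
          · have := hqle (t + 2) htn
            nlinarith
          · have hq1 : (0:ℝ) < (q τ (t + 2) : ℝ) := by
              have : 1 ≤ q τ (t + 2) := Nat.le_add_right 1 _
              exact_mod_cast Nat.lt_of_lt_of_le Nat.zero_lt_one this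
            have : 0 ≤ α / (q τ (t + 2) : ℝ) := by positivity
            simp [hb_def]; linarith
        have hexp : (t + 1) - c (t + 1) = (t - c t) + 1 := by
          have := hcle t; omega
        calc a ^ c (t + 1) * M ^ ((t + 1) - c (t + 1))
            = (a ^ c t * M ^ (t - c t)) * M := by
              rw [hexp, hc', pow_succ]; ring
          _ ≤ phi0 τ α i (t + 1) * (α / (q τ (t + 2) : ℝ) + (1 - α) *
                (if i (t + 2) = i (t + 1) then 1 else 0)) :=
              mul_le_mul ihx hfac hMpos.le hphi_nonneg
          _ = phi0 τ α i (t + 2) := hphi.symm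
      · -- switch
        have hc' : c (t + 1) = c t + 1 := by simp [hsplit, hsw]
        have hfac : a ≤ α / (q τ (t + 2) : ℝ) + (1 - α) *
            (if i (t + 2) = i (t + 1) then 1 else 0) := by
          rw [if_neg hsw]
          have := hqle (t + 2) htn
          nlinarith
        have hexp : (t + 1) - c (t + 1) = t - c t := by
          have := hcle t; omega
        calc a ^ c (t + 1) * M ^ ((t + 1) - c (t + 1))
            = (a ^ c t * M ^ (t - c t)) * a := by
              rw [hexp, hc', pow_succ]; ring
          _ ≤ phi0 τ α i (t + 1) * (α / (q τ (t + 2) : ℝ) + (1 - α) *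
                (if i (t + 2) = i (t + 1) then 1 else 0)) :=
              mul_le_mul ihx hfac ha.le hphi_nonneg
          _ = phi0 τ α i (t + 2) := hphi.symm
  have hkey := key (n - 1) le_rfl
  rw [show n - 1 + 1 = n by omega] at hkey
  set s : ℕ := c (n - 1) with hs_def
  have hsm : s ≤ m := hσ
  have hsn : s ≤ n - 1 := hcle (n - 1)
  -- chain of inequalities
  have haM : a ≤ M := le_max_left _ _
  have hbM : b ≤ M := le_max_right _ _
  have h1 : a ^ m * b ^ (n - m) ≤ a ^ m * b ^ (n - 1 - m) := by
    apply mul_le_mul_of_nonneg_left _ (by positivity)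
    exact pow_le_pow_of_le_one hb.le hb1 (by omega)
  have h2 : a ^ m * b ^ (n - 1 - m) ≤ a ^ m * M ^ (n - 1 - m) := by
    apply mul_le_mul_of_nonneg_left _ (by positivity)
    exact pow_le_pow_left₀ hb.le hbM _
  have h3 : a ^ m * M ^ (n - 1 - m) ≤ a ^ s * M ^ (n - 1 - s) := by
    have hmeq : m = s + (m - s) := by omega
    have hneq : n - 1 - s = (m - s) + (n - 1 - m) := by omega
    calc a ^ m * M ^ (n - 1 - m) = a ^ s * (a ^ (m - s) * M ^ (n - 1 - m)) := by
          rw [← mul_assoc, ← pow_add, show s + (m - s) = m from by omega]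
      _ ≤ a ^ s * (M ^ (m - s) * M ^ (n - 1 - m)) := by
          apply mul_le_mul_of_nonneg_left _ (by positivity)
          exact mul_le_mul_of_nonneg_right (pow_le_pow_left₀ ha.le haM _) (by positivity)
      _ = a ^ s * M ^ (n - 1 - s) := by rw [hneq, pow_add]
  exact le_trans (le_trans (le_trans h1 h2) h3) hkey
end

section
/- The tracking regret of the growing-ensemble fixed-shares forecaster satisfies R(i₁ⁿ) ≤ (m/η)·ln q_n − (1/η)·ln(α^m (1−α)^{n−m}) + ηn/8 for every admissible expert sequence i₁ⁿ with σ(i₁ⁿ) = m switches, given that the forecaster's loss satisfies the exponential-weighting bound ℓ(p̂₁ⁿ, y₁ⁿ) ≤ −(1/η)·ln φ_n(i₁ⁿ) + ηn/8 for all sequences. -/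
lemma q_pos (τ t : ℕ) : 0 < q τ t := Nat.succ_le_iff.mp (Nat.le_add_right 1 _)

lemma q_mono (τ : ℕ) {s t : ℕ} (h : s ≤ t) : q τ s ≤ q τ t :=
  Nat.add_le_add_left (Nat.div_le_div_right h) 1

lemma phi0_lower (τ : ℕ) (α : ℝ) (hα0 : 0 < α) (hα1 : α < 1)
    (i : ℕ → ℕ) (hfirst : i 1 = 1) :
    ∀ k : ℕ, (∀ t, 1 ≤ t → t ≤ k + 1 → 1 ≤ i t ∧ i t ≤ q τ t) →
      (α / (q τ (k + 1) : ℝ)) ^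
          (((Finset.Icc 1 k).filter (fun t => i (t + 1) ≠ i t)).card) *
        (1 - α) ^ (k - ((Finset.Icc 1 k).filter (fun t => i (t + 1) ≠ i t)).card)
        ≤ phi0 τ α i (k + 1) := by
  have h1α : (0:ℝ) < 1 - α := by linarith
  intro k
  induction k with
  | zero =>
    intro _
    simp [phi0, hfirst]
  | succ k ih =>
    intro hadm
    have hadm' : ∀ t, 1 ≤ t → t ≤ k + 1 → 1 ≤ i t ∧ i t ≤ q τ t := fun t h1 h2 =>
      hadm t h1 (h2.trans (Nat.le_succ _))
    have IH := ih hadm'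
    set m := ((Finset.Icc 1 k).filter (fun t => i (t + 1) ≠ i t)).card with hm
    have hmk : m ≤ k := le_trans (Finset.card_filter_le _ _) (by simp)
    have hicc : Finset.Icc 1 (k + 1) = insert (k + 1) (Finset.Icc 1 k) := by
      ext t; simp [Finset.mem_Icc, Finset.mem_insert]; omega
    have hq1 : (0:ℝ) < (q τ (k + 1) : ℝ) := by exact_mod_cast q_pos τ (k+1)
    have hq2 : (0:ℝ) < (q τ (k + 2) : ℝ) := by exact_mod_cast q_pos τ (k+2)
    have hqle : (q τ (k + 1) : ℝ) ≤ (q τ (k + 2) : ℝ) := by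
      exact_mod_cast q_mono τ (Nat.le_succ _)
    have hdivle : α / (q τ (k + 2) : ℝ) ≤ α / (q τ (k + 1) : ℝ) :=
      div_le_div_of_nonneg_left hα0.le hq1 hqle
    have hdivpos : (0:ℝ) < α / (q τ (k + 2) : ℝ) := div_pos hα0 hq2
    have hIH' : (α / (q τ (k + 2) : ℝ)) ^ m * (1 - α) ^ (k - m) ≤ phi0 τ α i (k + 1) := by
      refine le_trans (mul_le_mul_of_nonneg_right ?_ (by positivity)) IH
      exact pow_le_pow_left₀ hdivpos.le hdivle m
    have hphipos' : (0:ℝ) ≤ phi0 τ α i (k + 1) := le_trans (by positivity) hIH'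
    have hcond : 1 ≤ i (k + 2) ∧ i (k + 2) ≤ q τ (k + 2) := hadm (k + 2) (by omega) (by omega)
    rw [show k + 1 + 1 = k + 2 from rfl, phi0, if_pos hcond]
    by_cases hsw : i (k + 2) = i (k + 1)
    · -- no switch
      have hcard : ((Finset.Icc 1 (k+1)).filter (fun t => i (t + 1) ≠ i t)).card = m := by
        rw [hicc, Finset.filter_insert, if_neg (by simpa using hsw)]
      rw [hcard, if_pos hsw, mul_one]
      have hsub : k + 1 - m = (k - m) + 1 := by omega
      rw [hsub, pow_succ]
      calc (α / (q τ (k+2) : ℝ)) ^ m * ((1 - α) ^ (k - m) * (1 - α))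
          = ((α / (q τ (k+2) : ℝ)) ^ m * (1 - α) ^ (k - m)) * (1 - α) := by ring
        _ ≤ phi0 τ α i (k + 1) * (α / (q τ (k+2) : ℝ) + (1 - α)) :=
            mul_le_mul hIH' (by linarith) h1α.le hphipos'
    · -- switch
      have hcard : ((Finset.Icc 1 (k+1)).filter (fun t => i (t + 1) ≠ i t)).card = m + 1 := by
        rw [hicc, Finset.filter_insert, if_pos (by simpa using hsw)]
        rw [Finset.card_insert_of_notMem (by simp), hm]
      rw [hcard, if_neg hsw, mul_zero, add_zero]
      have hsub : k + 1 - (m + 1) = k - m := by omega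
      rw [hsub, pow_succ]
      calc (α / (q τ (k+2) : ℝ)) ^ m * (α / (q τ (k+2) : ℝ)) * (1 - α) ^ (k - m)
          = ((α / (q τ (k+2) : ℝ)) ^ m * (1 - α) ^ (k - m)) * (α / (q τ (k+2) : ℝ)) := by ring
        _ ≤ phi0 τ α i (k + 1) * (α / (q τ (k+2) : ℝ)) :=
            mul_le_mul_of_nonneg_right hIH' hdivpos.le

/-- Theorem 2 of the paper: if the forecaster's cumulative loss `L̂`
satisfies the exponential-weighting bound
`L̂ ≤ -(1/η)·ln φ_n(i₁ⁿ) + ηn/8` for all admissible expert sequences, where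
`φ_n(i₁ⁿ) = φ₀(i₁ⁿ)·exp(-η ℓ(i₁ⁿ, y₁ⁿ))`, then the tracking regret satisfies
`R(i₁ⁿ) = L̂ - ℓ(i₁ⁿ, y₁ⁿ) ≤ (m/η)·ln q_n - (1/η)·ln(α^m (1-α)^{n-m}) + ηn/8`
for every admissible sequence `i₁ⁿ` with `σ(i₁ⁿ) = m` switches. -/
theorem growing_ensemble_regret_bound (τ n m : ℕ) (hτ : 1 ≤ τ) (hn : 1 ≤ n)
    (α η : ℝ) (hα0 : 0 < α) (hα1 : α < 1) (hη : 0 < η)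
    (ℓ : ℕ → ℕ → ℝ) (Lhat : ℝ)
    (hmix : ∀ i : ℕ → ℕ, i 1 = 1 → (∀ t, 1 ≤ t → t ≤ n → 1 ≤ i t ∧ i t ≤ q τ t) →
      Lhat ≤ -(1 / η) *
          Real.log (phi0 τ α i n * Real.exp (-η * ∑ t ∈ Finset.Icc 1 n, ℓ (i t) t)) +
        η * n / 8)
    (i : ℕ → ℕ) (hfirst : i 1 = 1)
    (hadm : ∀ t, 1 ≤ t → t ≤ n → 1 ≤ i t ∧ i t ≤ q τ t)
    (hσ : ((Finset.Icc 1 (n - 1)).filter (fun t => i (t + 1) ≠ i t)).card = m) :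
    Lhat - ∑ t ∈ Finset.Icc 1 n, ℓ (i t) t ≤
      ((m : ℝ) / η) * Real.log (q τ n : ℝ) -
        (1 / η) * Real.log (α ^ m * (1 - α) ^ (n - m)) + η * n / 8 := by
  have h1α : (0:ℝ) < 1 - α := by linarith
  obtain ⟨k, rfl⟩ : ∃ k, n = k + 1 := ⟨n - 1, by omega⟩
  have hk : k + 1 - 1 = k := rfl
  rw [hk] at hσ
  have hmk : m ≤ k := hσ ▸ le_trans (Finset.card_filter_le _ _) (by simp)
  have hlow := phi0_lower τ α hα0 hα1 i hfirst k hadm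
  rw [hσ] at hlow
  set L := ∑ t ∈ Finset.Icc 1 (k+1), ℓ (i t) t
  have hq : (0:ℝ) < (q τ (k+1) : ℝ) := by exact_mod_cast q_pos τ (k+1)
  have hq1 : (1:ℝ) ≤ (q τ (k+1) : ℝ) := by exact_mod_cast q_pos τ (k+1)
  have hphipos : (0:ℝ) < phi0 τ α i (k+1) := lt_of_lt_of_le (by positivity) hlow
  have hstep := hmix i hfirst hadm
  rw [Real.log_mul hphipos.ne' (Real.exp_ne_zero _), Real.log_exp] at hstep
  -- lower bound: α^m (1-α)^(n-m) / q^m ≤ phi0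
  have hlow2 : α ^ m * (1 - α) ^ (k + 1 - m) / (q τ (k+1) : ℝ) ^ m ≤ phi0 τ α i (k+1) := by
    refine le_trans ?_ hlow
    rw [div_pow, div_mul_eq_mul_div, div_le_div_iff₀ (by positivity) (by positivity)]
    have hsub : k + 1 - m = (k - m) + 1 := by omega
    rw [hsub, pow_succ]
    have hx : (0:ℝ) ≤ α ^ m * (1 - α) ^ (k - m) := by positivity
    have hmo := mul_le_of_le_one_right hx (by linarith : 1 - α ≤ 1)
    have : α ^ m * ((1 - α) ^ (k - m) * (1 - α)) ≤ α ^ m * (1 - α) ^ (k - m) := by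
      nlinarith [hmo]
    calc α ^ m * ((1 - α) ^ (k - m) * (1 - α)) * (q τ (k+1) : ℝ) ^ m
        ≤ α ^ m * (1 - α) ^ (k - m) * (q τ (k+1) : ℝ) ^ m := by
          exact mul_le_mul_of_nonneg_right this (by positivity)
      _ = α ^ m * (1 - α) ^ (k - m) * (q τ (k+1) : ℝ) ^ m := rfl
  have hlogle : Real.log (α ^ m * (1 - α) ^ (k + 1 - m) / (q τ (k+1) : ℝ) ^ m)
      ≤ Real.log (phi0 τ α i (k+1)) :=
    Real.log_le_log (by positivity) hlow2
  have hlogeq : Real.log (α ^ m * (1 - α) ^ (k + 1 - m) / (q τ (k+1) : ℝ) ^ m)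
      = Real.log (α ^ m * (1 - α) ^ (k + 1 - m)) - m * Real.log (q τ (k+1) : ℝ) := by
    rw [Real.log_div (by positivity) (by positivity), Real.log_pow]
  have hηinv : (0:ℝ) < 1 / η := by positivity
  have : -(1/η) * Real.log (phi0 τ α i (k+1)) ≤
      -(1/η) * (Real.log (α ^ m * (1 - α) ^ (k + 1 - m)) - m * Real.log (q τ (k+1) : ℝ)) := by
    rw [← hlogeq]
    exact mul_le_mul_of_nonpos_left hlogle (by linarith)
  have hexp : -(1/η) * (Real.log (phi0 τ α i (k+1)) + -η * L)
      = -(1/η) * Real.log (phi0 τ α i (k+1)) + L := by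
    field_simp; ring
  rw [hexp] at hstep
  have h2 : -(1/η) * (Real.log (α ^ m * (1 - α) ^ (k + 1 - m)) - m * Real.log (q τ (k+1) : ℝ))
      = ((m:ℝ)/η) * Real.log (q τ (k+1) : ℝ) - (1/η) * Real.log (α ^ m * (1 - α) ^ (k + 1 - m)) := by
    ring
  push_cast at hstep ⊢
  linarith [this, h2, hstep]
end
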